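/- Let S > 0, f* ∈ ℝ, K ≥ 1, and let (f_k)_{k≥0} and (g_k)_{k≥0} be real sequences with g_k ≥ 0 and f_k ≥ f* for all k and f_0 > f*. If, for the stepsize α = √(2S(f_0 − f*)/K), the sequences satisfy f_{k+1} ≤ f_k − (α/S)·g_k + α²/(2S) for all k, then min_{0 ≤ k < K} g_k ≤ √(2S(f_0 − f*)/K). -/
import Mathlib


/-- Optimized-stepsize nonconvex rate of `STP_IS`: with `α = √(2S(f₀ − f*)/K)`,
`min_{0 ≤ k < K} g_k ≤ √(2S(f₀ − f*)/K)`. -/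
theorem stp_is_nonconvex_rate_optimal_stepsize
    (S fstar : ℝ) (hS : 0 < S)
    (f g : ℕ → ℝ) (hg : ∀ k, 0 ≤ g k) (hfl : ∀ k, fstar ≤ f k)
    (h0 : fstar < f 0)
    (K : ℕ) (hK : 1 ≤ K)
    (hdec : ∀ k, f (k + 1)
        ≤ f k - (Real.sqrt (2 * S * (f 0 - fstar) / K) / S) * g k
          + (Real.sqrt (2 * S * (f 0 - fstar) / K)) ^ 2 / (2 * S)) :
    (Finset.range K).inf' (Finset.nonempty_range_iff.mpr (by omega)) g
      ≤ Real.sqrt (2 * S * (f 0 - fstar) / K) := by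
  have hKpos : (0:ℝ) < K := by exact_mod_cast hK
  have hd : (0:ℝ) < f 0 - fstar := by linarith
  set A : ℝ := 2 * S * (f 0 - fstar) / K with hA
  have hApos : 0 < A := by positivity
  set α : ℝ := Real.sqrt A with hα
  have hαpos : 0 < α := Real.sqrt_pos.mpr hApos
  have hα2 : α ^ 2 = A := Real.sq_sqrt hApos.le
  -- telescoping
  have h1 : ∑ k ∈ Finset.range K, ((α / S) * g k - α ^ 2 / (2 * S))
      ≤ f 0 - f K := by
    rw [← Finset.sum_range_sub' f K]
    refine Finset.sum_le_sum fun k _ => ?_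
    have := hdec k
    linarith
  have hsum : ∑ k ∈ Finset.range K, ((α / S) * g k - α ^ 2 / (2 * S))
      = (α / S) * ∑ k ∈ Finset.range K, g k - (K : ℝ) * (α ^ 2 / (2 * S)) := by
    rw [Finset.sum_sub_distrib, ← Finset.mul_sum, Finset.sum_const, Finset.card_range,
      nsmul_eq_mul]
  have hKA : (K : ℝ) * (α ^ 2 / (2 * S)) = f 0 - fstar := by
    rw [hα2, hA]; field_simp
  have h2 : (α / S) * ∑ k ∈ Finset.range K, g k ≤ 2 * (f 0 - fstar) := by
    have hfK := hfl K
    rw [hsum, hKA] at h1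
    linarith
  have h3 : ∑ k ∈ Finset.range K, g k ≤ (K : ℝ) * α := by
    have : (α / S) * ((K : ℝ) * α) = 2 * (f 0 - fstar) := by
      have : (K : ℝ) * α ^ 2 = 2 * S * (f 0 - fstar) := by
        rw [hα2, hA]; field_simp
      field_simp
      nlinarith
    have hpos : 0 < α / S := by positivity
    nlinarith [h2]
  set m := (Finset.range K).inf' (Finset.nonempty_range_iff.mpr (by omega : K ≠ 0)) g with hm
  have h4 : (K : ℝ) * m ≤ ∑ k ∈ Finset.range K, g k := by
    calc (K : ℝ) * m = ∑ _k ∈ Finset.range K, m := by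
          rw [Finset.sum_const, Finset.card_range, nsmul_eq_mul]
      _ ≤ ∑ k ∈ Finset.range K, g k :=
          Finset.sum_le_sum fun k hk => Finset.inf'_le g hk
  have : (K : ℝ) * m ≤ (K : ℝ) * α := le_trans h4 h3
  exact le_of_mul_le_mul_left this hKpos
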